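/- Let E and F be real Banach spaces, μ : F → ℝ a nonzero continuous linear functional, U ⊆ E an open set, and f : U → F a continuously differentiable (C¹) map whose image is contained in the closed half-plane F_μ^+ = {y ∈ F : μ(y) ≥ 0}. If x₀ ∈ U and the derivative Df(x₀) : E → F is surjective, then μ(f(x₀)) > 0. -/

import Mathlib

/-!
If `μ (f x₀) = 0`, then `x₀` is a local minimum of `μ ∘ f`, so Fermat's rule gives
`μ ∘ Df(x₀) = 0`; as `Df(x₀)` is surjective, this forces `μ = 0`.
-/

open Function

theorem ContinuousLinearMap.eq_zero_of_comp_eq_zero_of_surjective {R E F G : Type*}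
    [Semiring R] [TopologicalSpace E] [AddCommMonoid E] [Module R E]
    [TopologicalSpace F] [AddCommMonoid F] [Module R F]
    [TopologicalSpace G] [AddCommMonoid G] [Module R G]
    {μ : F →L[R] G} {L : E →L[R] F} (hL : Surjective L) (h : μ.comp L = 0) : μ = 0 := by
  ext y
  obtain ⟨x, rfl⟩ := hL y
  exact congr($h x)

theorem eq_zero_of_isLocalMin_comp_of_surjective {E F : Type*}
    [NormedAddCommGroup E] [NormedSpace ℝ E] [NormedAddCommGroup F] [NormedSpace ℝ F]
    {μ : F →L[ℝ] ℝ} {f : E → F} {f' : E →L[ℝ] F} {x₀ : E}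
    (hf : HasFDerivAt f f' x₀) (hsurj : Surjective f') (hmin : IsLocalMin (μ ∘ f) x₀) :
    μ = 0 :=
  μ.eq_zero_of_comp_eq_zero_of_surjective hsurj
    (hmin.hasFDerivAt_eq_zero (μ.hasFDerivAt.comp x₀ hf))

theorem pos_of_surjective_fderiv_halfplane_general {E F : Type*}
    [NormedAddCommGroup E] [NormedSpace ℝ E]
    [NormedAddCommGroup F] [NormedSpace ℝ F]
    (μ : F →L[ℝ] ℝ) (hμ : μ ≠ 0)
    (U : Set E) (hU : IsOpen U)
    (f : E → F) (hf : ContDiffOn ℝ 1 f U)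
    (hrange : ∀ x ∈ U, 0 ≤ μ (f x))
    (x₀ : E) (hx₀ : x₀ ∈ U)
    (hsurj : Function.Surjective (fderiv ℝ f x₀)) :
    0 < μ (f x₀) := by
  refine (hrange x₀ hx₀).lt_of_ne fun hzero => hμ ?_
  have hdiff : DifferentiableAt ℝ f x₀ :=
    (hf.contDiffAt (hU.mem_nhds hx₀)).differentiableAt one_ne_zero
  have hmin : IsLocalMin (μ ∘ f) x₀ :=
    Filter.mem_of_superset (hU.mem_nhds hx₀) fun x hx =>
      show μ (f x₀) ≤ μ (f x) from hzero ▸ hrange x hx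
  exact eq_zero_of_isLocalMin_comp_of_surjective hdiff.hasFDerivAt hsurj hmin

/-- A C¹ map on an open set whose image lies in the closed half-plane `{μ ≥ 0}` and whose
derivative is surjective at `x₀` must map `x₀` into the open half-plane `{μ > 0}`. -/
theorem pos_of_surjective_fderiv_halfplane {E F : Type*}
    [NormedAddCommGroup E] [NormedSpace ℝ E] [CompleteSpace E]
    [NormedAddCommGroup F] [NormedSpace ℝ F] [CompleteSpace F]
    (μ : F →L[ℝ] ℝ) (hμ : μ ≠ 0)
    (U : Set E) (hU : IsOpen U)
    (f : E → F) (hf : ContDiffOn ℝ 1 f U)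
    (hrange : ∀ x ∈ U, 0 ≤ μ (f x))
    (x₀ : E) (hx₀ : x₀ ∈ U)
    (hsurj : Function.Surjective (fderiv ℝ f x₀)) :
    0 < μ (f x₀) :=
  pos_of_surjective_fderiv_halfplane_general μ hμ U hU f hf hrange x₀ hx₀ hsurj
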